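/- With state parameters δ = 0, c = √(9/15) and measurement parameters α = β = π/3, φ = ξ = π/2, the Cabello state |Ψ^C⟩ satisfies the two zero-probability constraints and achieves degree of success S = P(+,+|A_1,B_1) − P(+,+|A_0,B_0) = 3/80 > 0. -/

import Mathlib

/-!
The `|01⟩` and `|10⟩` amplitudes `-c e^{-iφ} tan(α/2)`, `-c e^{-iξ} tan(β/2)` of the Cabello state
cancel the `|11⟩` contribution in the amplitudes of `(+,-|A₁,B₀)` and `(-,+|A₀,B₁)` for all angles,
because `tan(α/2) cos(α/2) = sin(α/2)`. The same cancellation leaves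
`⟨Ψ|u ⊗ v⟩ = conj Ψ₀₀ cos(α/2) cos(β/2) - c e^{i(φ+ξ)} sin(α/2) sin(β/2)`. For `c² = 3/5` and
`α = β = π/3` the normalisation `c² (1 + 2 tan²(π/6)) = 1` makes `Ψ₀₀ = 0`, so
`S = c² sin⁴(π/6) = 3/80`.
-/

open Complex Real Matrix ComplexConjugate

/-- The Cabello state with `δ = 0`; the entry `(i, j)` is the coefficient of `|ij⟩`. -/
noncomputable def cabelloState (c α β φ ξ : ℝ) : Matrix (Fin 2) (Fin 2) ℂ :=
  !![(Real.sqrt (1 - c ^ 2 * (1 + Real.tan (α / 2) ^ 2 + Real.tan (β / 2) ^ 2)) : ℂ),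
      -(c : ℂ) * Complex.exp (-Complex.I * φ) * (Real.tan (α / 2) : ℂ);
      -(c : ℂ) * Complex.exp (-Complex.I * ξ) * (Real.tan (β / 2) : ℂ), (c : ℂ)]

/-- The `+1` eigenvector of `A₁(θ, φ)` and of `B₁(θ, φ)`. -/
noncomputable def blochKet (θ φ : ℝ) : Fin 2 → ℂ :=
  ![(Real.cos (θ / 2) : ℂ), Complex.exp (Complex.I * φ) * (Real.sin (θ / 2) : ℂ)]

noncomputable def overlap (Ψ : Matrix (Fin 2) (Fin 2) ℂ) (u v : Fin 2 → ℂ) : ℂ :=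
  ∑ i, ∑ j, (starRingEnd ℂ) (Ψ i j) * (u i * v j)

lemma overlap_eq (Ψ : Matrix (Fin 2) (Fin 2) ℂ) (u v : Fin 2 → ℂ) :
    overlap Ψ u v = conj (Ψ 0 0) * (u 0 * v 0) + conj (Ψ 0 1) * (u 0 * v 1)
      + (conj (Ψ 1 0) * (u 1 * v 0) + conj (Ψ 1 1) * (u 1 * v 1)) := by
  simp only [overlap, Fin.sum_univ_two]

lemma conj_exp_neg_I_mul (φ : ℝ) :
    conj (Complex.exp (-Complex.I * φ)) = Complex.exp (Complex.I * φ) := by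
  rw [← Complex.exp_conj, map_mul, map_neg, Complex.conj_I, Complex.conj_ofReal, neg_neg]

lemma ofReal_tan_mul_ofReal_cos {x : ℝ} (hx : Real.cos x ≠ 0) :
    (Real.tan x : ℂ) * Real.cos x = Real.sin x := by
  exact_mod_cast Real.tan_mul_cos hx

section CabelloState

variable {c α β φ ξ : ℝ}

lemma cabelloState_zero_zero (h : c ^ 2 * (1 + Real.tan (α / 2) ^ 2 + Real.tan (β / 2) ^ 2) = 1) :
    cabelloState c α β φ ξ 0 0 = 0 := by
  simp [cabelloState, h]

lemma overlap_cabelloState_blochKet_e1 (hα : Real.cos (α / 2) ≠ 0) :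
    overlap (cabelloState c α β φ ξ) (blochKet α φ) ![0, 1] = 0 := by
  rw [overlap_eq]
  simp only [cabelloState, blochKet, of_apply, cons_val', cons_val_zero, cons_val_one,
    empty_val', cons_val_fin_one, map_mul, map_neg, conj_exp_neg_I_mul, Complex.conj_ofReal]
  linear_combination (-(c : ℂ) * Complex.exp (Complex.I * φ)) * ofReal_tan_mul_ofReal_cos hα

lemma overlap_cabelloState_e1_blochKet (hβ : Real.cos (β / 2) ≠ 0) :
    overlap (cabelloState c α β φ ξ) ![0, 1] (blochKet β ξ) = 0 := by
  rw [overlap_eq]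
  simp only [cabelloState, blochKet, of_apply, cons_val', cons_val_zero, cons_val_one,
    empty_val', cons_val_fin_one, map_mul, map_neg, conj_exp_neg_I_mul, Complex.conj_ofReal]
  linear_combination (-(c : ℂ) * Complex.exp (Complex.I * ξ)) * ofReal_tan_mul_ofReal_cos hβ

lemma overlap_cabelloState_blochKet (hα : Real.cos (α / 2) ≠ 0) (hβ : Real.cos (β / 2) ≠ 0) :
    overlap (cabelloState c α β φ ξ) (blochKet α φ) (blochKet β ξ)
      = conj (cabelloState c α β φ ξ 0 0) * (Real.cos (α / 2) * Real.cos (β / 2))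
        - c * Complex.exp (Complex.I * ↑(φ + ξ)) * (Real.sin (α / 2) * Real.sin (β / 2)) := by
  rw [overlap_eq, ofReal_add, mul_add, Complex.exp_add]
  simp only [cabelloState, blochKet, of_apply, cons_val', cons_val_zero, cons_val_one,
    empty_val', cons_val_fin_one, map_mul, map_neg, conj_exp_neg_I_mul, Complex.conj_ofReal]
  linear_combination
    (-(c : ℂ) * Complex.exp (Complex.I * φ) * Complex.exp (Complex.I * ξ)) *
      (Real.sin (β / 2) * ofReal_tan_mul_ofReal_cos hα + Real.sin (α / 2) * ofReal_tan_mul_ofReal_cos hβ)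

lemma cabello_success_eq
    (hnorm : c ^ 2 * (1 + Real.tan (α / 2) ^ 2 + Real.tan (β / 2) ^ 2) = 1)
    (hα : Real.cos (α / 2) ≠ 0) (hβ : Real.cos (β / 2) ≠ 0) :
    ‖overlap (cabelloState c α β φ ξ) (blochKet α φ) (blochKet β ξ)‖ ^ 2
      - ‖cabelloState c α β φ ξ 0 0‖ ^ 2 = c ^ 2 * Real.sin (α / 2) ^ 2 * Real.sin (β / 2) ^ 2 := by
  rw [overlap_cabelloState_blochKet hα hβ, cabelloState_zero_zero hnorm]
  simp only [map_zero, zero_mul, zero_sub, norm_neg, norm_mul, Complex.norm_real, Real.norm_eq_abs,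
    Complex.norm_exp_I_mul_ofReal, norm_zero, mul_pow, sq_abs, mul_one]
  ring

end CabelloState

/-- With `δ = 0`, `c = √(9/15)`, `α = β = π/3`, `φ = ξ = π/2`, the Cabello state
satisfies the two zero-probability constraints and achieves success `S = 3/80 > 0`. -/
theorem cabello_example_three_eightieths :
    let c : ℝ := Real.sqrt (9 / 15)
    let α : ℝ := Real.pi / 3
    let β : ℝ := Real.pi / 3
    let φ : ℝ := Real.pi / 2
    let ξ : ℝ := Real.pi / 2
    let Ψ : Matrix (Fin 2) (Fin 2) ℂ :=
      !![(Real.sqrt (1 - c ^ 2 * (1 + Real.tan (α / 2) ^ 2 + Real.tan (β / 2) ^ 2)) : ℂ),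
          -(c : ℂ) * Complex.exp (-Complex.I * φ) * (Real.tan (α / 2) : ℂ);
          -(c : ℂ) * Complex.exp (-Complex.I * ξ) * (Real.tan (β / 2) : ℂ), (c : ℂ)]
    let u : Fin 2 → ℂ := ![(Real.cos (α / 2) : ℂ),
          Complex.exp (Complex.I * φ) * (Real.sin (α / 2) : ℂ)]
    let v : Fin 2 → ℂ := ![(Real.cos (β / 2) : ℂ),
          Complex.exp (Complex.I * ξ) * (Real.sin (β / 2) : ℂ)]
    let e1 : Fin 2 → ℂ := ![0, 1]
    -- P(+,-|A₁,B₀) = 0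
    ‖∑ i, ∑ j, (starRingEnd ℂ) (Ψ i j) * (u i * e1 j)‖ ^ 2 = 0 ∧
    -- P(-,+|A₀,B₁) = 0
    ‖∑ i, ∑ j, (starRingEnd ℂ) (Ψ i j) * (e1 i * v j)‖ ^ 2 = 0 ∧
    -- S = p - q = 3/80 > 0
    ‖∑ i, ∑ j, (starRingEnd ℂ) (Ψ i j) * (u i * v j)‖ ^ 2
      - ‖Ψ 0 0‖ ^ 2 = 3 / 80 := by
  intro c α β φ ξ Ψ u v e1
  have hα : α / 2 = π / 6 := by change π / 3 / 2 = π / 6; ring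
  have hβ : β / 2 = π / 6 := hα
  have hc : c ^ 2 = 9 / 15 := Real.sq_sqrt (by norm_num)
  have hcos : Real.cos (π / 6) ≠ 0 := by rw [cos_pi_div_six]; positivity
  have hnorm : c ^ 2 * (1 + Real.tan (α / 2) ^ 2 + Real.tan (β / 2) ^ 2) = 1 := by
    rw [hα, tan_pi_div_six, hc, div_pow, sq_sqrt (by norm_num)]
    norm_num
  refine ⟨?_, ?_, ?_⟩
  · change ‖overlap (cabelloState c α β φ ξ) (blochKet α φ) ![0, 1]‖ ^ 2 = 0
    rw [overlap_cabelloState_blochKet_e1 (hα ▸ hcos), norm_zero, zero_pow two_ne_zero]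
  · change ‖overlap (cabelloState c α β φ ξ) ![0, 1] (blochKet β ξ)‖ ^ 2 = 0
    rw [overlap_cabelloState_e1_blochKet (hβ ▸ hcos), norm_zero, zero_pow two_ne_zero]
  · change ‖overlap (cabelloState c α β φ ξ) (blochKet α φ) (blochKet β ξ)‖ ^ 2
      - ‖cabelloState c α β φ ξ 0 0‖ ^ 2 = 3 / 80
    rw [cabello_success_eq hnorm (hα ▸ hcos) (hβ ▸ hcos), hα, sin_pi_div_six, hc]
    norm_num
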